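/- Let n ≥ 2 be an integer, ε > 0, and m, m' ∈ ℤⁿ. Then ∫_{[0,2π]^n} ∫_{S^{n-1}_ε} (−⟨m', y⟩) e^{i⟨m−m', x⟩} e^{−⟨m+m', y⟩} dσ_ε(y) dx = (2π)^n ε^{n} |m| γ_n'(2ε|m|) vol(S^{n-2}) if m = m', and equals 0 if m ≠ m'. -/

import Mathlib

open MeasureTheory

/-- The `(n-1)`-dimensional surface measure on the sphere of radius `r` centered at the
origin of `ℝⁿ`: the pushforward of the canonical surface measure `volume.toSphere` on the
unit sphere under the scaling `y ↦ r • y`, scaled by the factor `r^(n-1)`. -/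
noncomputable def sphereMeasure (n : ℕ) (r : ℝ) :
    Measure (EuclideanSpace ℝ (Fin n)) :=
  ENNReal.ofReal (r ^ (n - 1)) •
    Measure.map
      (fun y : Metric.sphere (0 : EuclideanSpace ℝ (Fin n)) 1 =>
        r • (y : EuclideanSpace ℝ (Fin n)))
      (volume : Measure (EuclideanSpace ℝ (Fin n))).toSphere

/-- `vol(S^d)`: the total surface measure of the unit sphere `S^d ⊆ ℝ^(d+1)`
(so `vol(S⁰) = 2`). -/
noncomputable def sphereVol (d : ℕ) : ℝ :=
  (sphereMeasure (d + 1) 1 Set.univ).toReal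

/-- For an integer `n ≥ 2`, `γ_n (t) = ∫₀^π e^{t cos α} (sin α)^(n-2) dα`. -/
noncomputable def gammaN (n : ℕ) (t : ℝ) : ℝ :=
  ∫ α in (0:ℝ)..Real.pi, Real.exp (t * Real.cos α) * Real.sin α ^ (n - 2)

/-- The derivative `γ_n' (t) = ∫₀^π cos α · e^{t cos α} (sin α)^(n-2) dα`. -/
noncomputable def gammaN' (n : ℕ) (t : ℝ) : ℝ :=
  ∫ α in (0:ℝ)..Real.pi, Real.cos α * Real.exp (t * Real.cos α) * Real.sin α ^ (n - 2)

/-- A vector `m ∈ ℤⁿ` regarded as a vector in Euclidean space `ℝⁿ`. -/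
def intVec {n : ℕ} (m : Fin n → ℤ) : EuclideanSpace ℝ (Fin n) := WithLp.toLp 2 (fun i => (m i : ℝ))

/-!
The `x`-integrand is `e^{i⟨m-m',x⟩}` times a function of `y` alone, and the integral of
`e^{i⟨a,x⟩}` over `[0,2π]^n` vanishes unless `a = 0`. For `m = m'` what remains is a zonal
integral `∫ g(⟨u,ω⟩) dω` over the unit sphere. A reflection taking `u` to `|u| e₀` reduces it
to `∫ g(ω₀) dω`, which is computed by integrating `g(x₀/|x|)` over the unit ball in two ways:
in spherical coordinates the result is `(1/n) ∫ g(ω₀) dω`; slicing along `x₀ = s` and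
integrating radially in the remaining `n-1` coordinates gives an integral over the upper half
disc, which polar coordinates evaluate to `(1/n) vol(S^{n-2}) ∫₀^π g(cos α) sin^{n-2} α dα`.
Finally `α ↦ π - α` turns the result into `γ_n'`.
-/

open Metric Set Real
open scoped Pointwise

local notation "ℝ^" n:max => EuclideanSpace ℝ (Fin n)

namespace LinearIsometryEquiv

variable {E : Type*} [NormedAddCommGroup E] [NormedSpace ℝ E]

def restrictSphere (R : E ≃ₗᵢ[ℝ] E) : sphere (0 : E) 1 ≃ₜ sphere (0 : E) 1 :=
  R.toHomeomorph.subtype fun x => by simp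

@[simp]
theorem coe_restrictSphere (R : E ≃ₗᵢ[ℝ] E) (ω : sphere (0 : E) 1) :
    (R.restrictSphere ω : E) = R ω := rfl

theorem preimage_smul (R : E ≃ₗᵢ[ℝ] E) (s : Set ℝ) (t : Set E) :
    R ⁻¹' (s • t) = s • R ⁻¹' t := by
  ext x
  simp only [mem_preimage, mem_smul]
  constructor
  · rintro ⟨c, hc, y, hy, hxy⟩
    exact ⟨c, hc, R.symm y, by simpa using hy, by rw [← map_smul, hxy, symm_apply_apply]⟩
  · rintro ⟨c, hc, y, hy, rfl⟩
    exact ⟨c, hc, R y, hy, (R.map_smul c y).symm⟩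

variable [MeasurableSpace E] [BorelSpace E]

theorem measurePreserving_restrictSphere {μ : Measure E} (R : E ≃ₗᵢ[ℝ] E)
    (hR : MeasurePreserving R μ μ) :
    MeasurePreserving R.restrictSphere μ.toSphere μ.toSphere := by
  refine ⟨R.restrictSphere.measurable, Measure.ext fun s hs => ?_⟩
  have hpre : ((↑) '' (R.restrictSphere ⁻¹' s) : Set E) = R ⁻¹' ((↑) '' s) := by
    ext x
    constructor
    · rintro ⟨ω, hω, rfl⟩
      exact ⟨_, hω, rfl⟩
    · rintro ⟨ω, hω, hx⟩
      have hx1 : x ∈ sphere (0 : E) 1 := by simp [← R.norm_map x, ← hx]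
      exact ⟨⟨x, hx1⟩, by rwa [mem_preimage, show R.restrictSphere ⟨x, hx1⟩ = ω from
        Subtype.ext hx.symm], rfl⟩
  rw [Measure.map_apply R.restrictSphere.measurable hs,
    Measure.toSphere_apply' _ (R.restrictSphere.measurable hs), Measure.toSphere_apply' _ hs,
    hpre, ← preimage_smul, hR.measure_preimage_emb R.toHomeomorph.measurableEmbedding]

end LinearIsometryEquiv

theorem setIntegral_unitBall_comp_smul_inv_norm {E : Type*} [NormedAddCommGroup E]
    [NormedSpace ℝ E] [FiniteDimensional ℝ E] [Nontrivial E] [MeasurableSpace E] [BorelSpace E]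
    (μ : Measure E) [μ.IsAddHaarMeasure] (f : E → ℝ) :
    ∫ x in ball (0 : E) 1, f (‖x‖⁻¹ • x) ∂μ =
      (Module.finrank ℝ E : ℝ)⁻¹ * ∫ ω, f ω ∂μ.toSphere := by
  set d := Module.finrank ℝ E
  have hd : 0 < d := Module.finrank_pos
  let radii : Set (Ioi (0 : ℝ)) := Iio ⟨1, mem_Ioi.2 one_pos⟩
  calc ∫ x in ball (0 : E) 1, f (‖x‖⁻¹ • x) ∂μ
      = ∫ x : ({0}ᶜ : Set E), (ball (0 : E) 1).indicator (fun x => f (‖x‖⁻¹ • x)) x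
          ∂μ.comap (↑) := by
        rw [← integral_indicator measurableSet_ball, integral_subtype_comap
          (measurableSet_singleton _).compl, restrict_compl_singleton]
    _ = ∫ p, f p.1 * radii.indicator 1 p.2 ∂μ.toSphere.prod (.volumeIoiPow (d - 1)) := by
        rw [← μ.measurePreserving_homeomorphUnitSphereProd.integral_comp
          (Homeomorph.measurableEmbedding _)]
        congr 1 with x
        by_cases hx : ‖(x : E)‖ < 1 <;> simp [hx, radii, ← Subtype.coe_lt_coe]
    _ = (∫ ω, f ω ∂μ.toSphere) * (Measure.volumeIoiPow (d - 1)).real radii := by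
        rw [integral_prod_mul (fun ω : sphere (0 : E) 1 => f ω) (radii.indicator 1),
          integral_indicator_one measurableSet_Iio]
    _ = _ := by
        rw [measureReal_def, Measure.volumeIoiPow_apply_Iio, Nat.sub_add_cancel hd,
          ENNReal.toReal_ofReal (by positivity)]
        simp [Nat.cast_pred hd, mul_comm]

namespace EuclideanSpace

theorem integral_eq_integral_integral_cons {G : Type*} [NormedAddCommGroup G] [NormedSpace ℝ G]
    {n : ℕ} {F : ℝ^(n + 1) → G} (hF : Integrable F) :
    ∫ x, F x = ∫ s, ∫ y : ℝ^n, F (WithLp.toLp 2 (Fin.cons s y.ofLp)) := by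
  let e : ℝ × (Fin n → ℝ) ≃ᵐ ℝ^(n + 1) :=
    (MeasurableEquiv.piFinSuccAbove (fun _ => ℝ) 0).symm.trans (MeasurableEquiv.toLp 2 _)
  have he : MeasurePreserving e (volume.prod volume) volume :=
    (PiLp.volume_preserving_toLp (Fin (n + 1))).comp
      (volume_preserving_piFinSuccAbove (fun _ : Fin (n + 1) => ℝ) 0).symm
  have he_apply (s : ℝ) (v : Fin n → ℝ) : e (s, v) = WithLp.toLp 2 (Fin.cons s v) := by
    simp [e, Fin.consEquiv]
  rw [← he.integral_comp',
    integral_prod (fun p => F (e p)) ((he.integrable_comp_emb e.measurableEmbedding).2 hF)]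
  congr 1 with s
  simp only [he_apply]
  exact ((volume_preserving_symm_measurableEquiv_toLp (Fin n)).integral_comp'
    fun v => F (WithLp.toLp 2 (Fin.cons s v))).symm

theorem norm_toLp_cons {n : ℕ} (s : ℝ) (y : ℝ^n) :
    ‖(WithLp.toLp 2 (Fin.cons s y.ofLp) : ℝ^(n + 1))‖ = √(s ^ 2 + ‖y‖ ^ 2) := by
  rw [EuclideanSpace.norm_eq, EuclideanSpace.norm_eq, Real.sq_sqrt (by positivity),
    Fin.sum_univ_succ]
  simp

end EuclideanSpace

/-- The slice `x₀ = s` of `x ↦ g (x₀ / ‖x‖)` on the unit ball of `ℝ^(k+2)`, written in the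
radius `r` of the remaining `k + 1` coordinates and weighted by the Jacobian `r ^ k`. -/
noncomputable def halfDiscIntegrand (k : ℕ) (g : ℝ → ℝ) (p : ℝ × ℝ) : ℝ :=
  (Ioi 0).indicator
    (fun r => r ^ k * (Iio 1).indicator (fun ρ => g (p.1 / ρ)) √(p.1 ^ 2 + r ^ 2)) p.2

section HalfDisc

variable (k : ℕ) {g : ℝ → ℝ}

theorem measurable_halfDiscIntegrand (hg : Continuous g) :
    Measurable (halfDiscIntegrand k g) := by
  have hρ : Measurable fun p : ℝ × ℝ => √(p.1 ^ 2 + p.2 ^ 2) := by fun_prop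
  unfold halfDiscIntegrand
  simp only [indicator_apply]
  refine Measurable.ite (measurable_snd measurableSet_Ioi) ?_ measurable_const
  refine (measurable_snd.pow_const k).mul
    (Measurable.ite (hρ measurableSet_Iio) ?_ measurable_const)
  exact hg.measurable.comp (measurable_fst.div hρ)

theorem integrable_halfDiscIntegrand (hg : Continuous g) :
    Integrable (halfDiscIntegrand k g) := by
  obtain ⟨C, hC⟩ := (isCompact_Icc (a := (-1 : ℝ)) (b := 1)).exists_bound_of_continuousOn
    hg.continuousOn
  have hC0 : 0 ≤ C := (norm_nonneg _).trans (hC 0 ⟨by norm_num, by norm_num⟩)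
  have hsupport : ∀ p, halfDiscIntegrand k g p ≠ 0 →
      p ∈ ball (0 : ℝ × ℝ) 1 ∧ ‖halfDiscIntegrand k g p‖ ≤ C := by
    rintro ⟨s, r⟩ hp
    by_cases hr : 0 < r
    swap
    · simp [halfDiscIntegrand, hr] at hp
    by_cases hρ : √(s ^ 2 + r ^ 2) < 1
    swap
    · simp [halfDiscIntegrand, hρ] at hp
    have hs : |s| ≤ √(s ^ 2 + r ^ 2) := abs_le_sqrt (by nlinarith)
    have hr' : |r| ≤ √(s ^ 2 + r ^ 2) := abs_le_sqrt (by nlinarith)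
    refine ⟨?_, ?_⟩
    · simp only [mem_ball_zero_iff, Prod.norm_def, Real.norm_eq_abs, max_lt_iff]
      exact ⟨hs.trans_lt hρ, hr'.trans_lt hρ⟩
    · have hρ0 : 0 < √(s ^ 2 + r ^ 2) := hr.trans_le ((le_abs_self r).trans hr')
      have hg_le : ‖g (s / √(s ^ 2 + r ^ 2))‖ ≤ C := by
        refine hC _ (abs_le.1 ?_)
        rw [abs_div, abs_of_pos hρ0]
        exact div_le_one_of_le₀ hs hρ0.le
      have hrk : r ^ k ≤ 1 := pow_le_one₀ hr.le ((le_abs_self r).trans hr' |>.trans hρ.le)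
      simp only [halfDiscIntegrand, indicator_of_mem (show r ∈ Ioi 0 from hr),
        indicator_of_mem (show √(s ^ 2 + r ^ 2) ∈ Iio 1 from hρ), norm_mul, norm_pow,
        Real.norm_of_nonneg hr.le]
      calc r ^ k * ‖g (s / √(s ^ 2 + r ^ 2))‖ ≤ 1 * C := by gcongr
        _ = C := one_mul C
  refine (integrableOn_iff_integrable_of_support_subset fun p hp => (hsupport p hp).1).1
    (Measure.integrableOn_of_bounded (M := C) measure_ball_lt_top.ne
      (measurable_halfDiscIntegrand k hg).aestronglyMeasurable (ae_of_all _ fun p => ?_))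
  by_cases hp : halfDiscIntegrand k g p = 0
  · simpa [hp] using hC0
  · exact (hsupport p hp).2

theorem integral_halfDiscIntegrand :
    ∫ p, halfDiscIntegrand k g p = (k + 2 : ℝ)⁻¹ * ∫ α in 0..π, g (cos α) * sin α ^ k := by
  have hpolar : ∀ p ∈ polarCoord.target, p.1 • halfDiscIntegrand k g (polarCoord.symm p) =
      (Iio 1).indicator (· ^ (k + 1)) p.1 *
        (Ioo 0 π).indicator (fun θ => g (cos θ) * sin θ ^ k) p.2 := by
    rintro ⟨ρ, θ⟩ ⟨hρ : 0 < ρ, hθ : θ ∈ Ioo (-π) π⟩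
    have hsqrt : √((ρ * cos θ) ^ 2 + (ρ * sin θ) ^ 2) = ρ := by
      rw [mul_pow, mul_pow, ← mul_add, cos_sq_add_sin_sq, mul_one, sqrt_sq hρ.le]
    have hpos : 0 < ρ * sin θ ↔ θ ∈ Ioo 0 π := by
      rw [mul_pos_iff_of_pos_left hρ]
      refine ⟨fun h => ⟨?_, hθ.2⟩, fun h => sin_pos_of_pos_of_lt_pi h.1 h.2⟩
      by_contra hθ0
      exact h.not_ge (sin_nonpos_of_nonpos_of_neg_pi_le (not_lt.1 hθ0) hθ.1.le)
    simp only [polarCoord_symm_apply, halfDiscIntegrand, hsqrt, indicator_apply, mem_Ioi, hpos,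
      mem_Iio, smul_eq_mul, mul_div_cancel_left₀ _ hρ.ne']
    split_ifs <;> ring
  calc ∫ p, halfDiscIntegrand k g p
      = ∫ p in polarCoord.target, p.1 • halfDiscIntegrand k g (polarCoord.symm p) :=
        (integral_comp_polarCoord_symm _).symm
    _ = ∫ p in Ioi 0 ×ˢ Ioo (-π) π, (Iio 1).indicator (· ^ (k + 1)) p.1 *
          (Ioo 0 π).indicator (fun θ => g (cos θ) * sin θ ^ k) p.2 :=
        setIntegral_congr_fun polarCoord.open_target.measurableSet hpolar
    _ = (∫ ρ in Ioi 0, (Iio 1).indicator (· ^ (k + 1)) ρ) *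
          ∫ θ in Ioo (-π) π, (Ioo 0 π).indicator (fun θ => g (cos θ) * sin θ ^ k) θ := by
        rw [Measure.volume_eq_prod, ← Measure.prod_restrict]
        exact integral_prod_mul _ _
    _ = _ := by
        rw [setIntegral_indicator measurableSet_Iio, setIntegral_indicator measurableSet_Ioo,
          Ioi_inter_Iio, Ioo_inter_Ioo, max_eq_right (by linarith [pi_pos]), min_self,
          ← integral_Ioc_eq_integral_Ioo, ← integral_Ioc_eq_integral_Ioo,
          ← intervalIntegral.integral_of_le zero_le_one,
          ← intervalIntegral.integral_of_le pi_pos.le, integral_pow]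
        push_cast
        ring

end HalfDisc

theorem sphereVol_eq_toSphere_real_univ (d : ℕ) :
    sphereVol d = (volume : Measure (ℝ^(d + 1))).toSphere.real univ := by
  rw [sphereVol, sphereMeasure, measureReal_def]
  simp [Measure.map_apply measurable_subtype_coe MeasurableSet.univ]

section Zonal

variable (k : ℕ) {g : ℝ → ℝ}

theorem integrable_indicator_unitBall_comp_apply_zero_div_norm (hg : Continuous g) :
    Integrable ((ball (0 : ℝ^(k + 2)) 1).indicator fun x => g (x 0 / ‖x‖)) := by
  obtain ⟨C, hC⟩ := (isCompact_Icc (a := (-1 : ℝ)) (b := 1)).exists_bound_of_continuousOn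
    hg.continuousOn
  refine (integrable_indicator_iff measurableSet_ball).2 <|
    Measure.integrableOn_of_bounded (M := C) measure_ball_lt_top.ne
      (hg.measurable.comp (by fun_prop)).aestronglyMeasurable (ae_of_all _ fun x => ?_)
  refine hC _ (abs_le.1 ?_)
  rcases eq_or_ne x 0 with rfl | hx
  · simp
  · rw [abs_div, abs_norm]
    exact div_le_one_of_le₀ (PiLp.norm_apply_le x 0) (norm_nonneg x)

theorem setIntegral_unitBall_eq_sphereVol_mul_integral_halfDiscIntegrand (hg : Continuous g) :
    ∫ x in ball (0 : ℝ^(k + 2)) 1, g (x 0 / ‖x‖) =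
      sphereVol k * ∫ p, halfDiscIntegrand k g p := by
  have hslice (s : ℝ) : ∫ y : ℝ^(k + 1),
      (ball (0 : ℝ^(k + 2)) 1).indicator (fun x => g (x 0 / ‖x‖))
        (WithLp.toLp 2 (Fin.cons s y.ofLp)) =
      sphereVol k * ∫ r, halfDiscIntegrand k g (s, r) := by
    have h := integral_fun_norm_addHaar (volume : Measure (ℝ^(k + 1)))
      fun r => (Iio 1).indicator (fun ρ => g (s / ρ)) √(s ^ 2 + r ^ 2)
    simp only [finrank_euclideanSpace_fin, Nat.add_sub_cancel, smul_eq_mul, nsmul_eq_mul] at h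
    rw [sphereVol_eq_toSphere_real_univ, Measure.toSphere_real_apply_univ,
      finrank_euclideanSpace_fin]
    simp only [halfDiscIntegrand]
    rw [integral_indicator measurableSet_Ioi, mul_assoc, ← h]
    congr 1 with y
    simp only [indicator, mem_ball_zero_iff, EuclideanSpace.norm_toLp_cons, mem_Iio]
    rfl
  rw [← integral_indicator measurableSet_ball, EuclideanSpace.integral_eq_integral_integral_cons
    (integrable_indicator_unitBall_comp_apply_zero_div_norm k hg)]
  simp only [hslice]
  rw [integral_const_mul, Measure.volume_eq_prod,
    integral_prod _ (integrable_halfDiscIntegrand k hg)]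

theorem integral_toSphere_comp_apply_zero (hg : Continuous g) :
    ∫ ω : sphere (0 : ℝ^(k + 2)) 1, g ((ω : ℝ^(k + 2)) 0) ∂(volume : Measure (ℝ^(k + 2))).toSphere =
      sphereVol k * ∫ α in 0..π, g (cos α) * sin α ^ k := by
  have h := setIntegral_unitBall_comp_smul_inv_norm (volume : Measure (ℝ^(k + 2)))
    fun x => g (x 0)
  simp only [PiLp.smul_apply, smul_eq_mul, inv_mul_eq_div] at h
  rw [setIntegral_unitBall_eq_sphereVol_mul_integral_halfDiscIntegrand k hg,
    integral_halfDiscIntegrand, finrank_euclideanSpace_fin, eq_div_iff (by positivity)] at h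
  rw [← h]
  push_cast
  field_simp

theorem integral_toSphere_comp_inner (hg : Continuous g) (u : ℝ^(k + 2)) :
    ∫ ω : sphere (0 : ℝ^(k + 2)) 1, g (inner ℝ u (ω : ℝ^(k + 2)))
        ∂(volume : Measure (ℝ^(k + 2))).toSphere =
      sphereVol k * ∫ α in 0..π, g (‖u‖ * cos α) * sin α ^ k := by
  set e₀ : ℝ^(k + 2) := EuclideanSpace.single 0 1
  set R := (Submodule.span ℝ {u - ‖u‖ • e₀})ᗮ.reflection
  have hRu : R u = ‖u‖ • e₀ := Submodule.reflection_sub (by simp [e₀, norm_smul])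
  have hinner (ω : sphere (0 : ℝ^(k + 2)) 1) :
      inner ℝ u (ω : ℝ^(k + 2)) = ‖u‖ * (R.restrictSphere ω : ℝ^(k + 2)) 0 := by
    rw [← R.inner_map_map, hRu, real_inner_smul_left, LinearIsometryEquiv.coe_restrictSphere,
      EuclideanSpace.inner_single_left]
    simp
  simp_rw [hinner]
  rw [(R.measurePreserving_restrictSphere R.measurePreserving).integral_comp
    R.restrictSphere.measurableEmbedding fun ω => g (‖u‖ * (ω : ℝ^(k + 2)) 0)]
  exact integral_toSphere_comp_apply_zero k (g := fun s => g (‖u‖ * s)) (by fun_prop)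

end Zonal

theorem integral_sphereMeasure {n : ℕ} {r : ℝ} (hr : 0 < r) (f : ℝ^n → ℝ) :
    ∫ y, f y ∂sphereMeasure n r =
      r ^ (n - 1) *
        ∫ ω : sphere (0 : ℝ^n) 1, f (r • (ω : ℝ^n)) ∂(volume : Measure (ℝ^n)).toSphere := by
  have hemb : MeasurableEmbedding fun ω : sphere (0 : ℝ^n) 1 => r • (ω : ℝ^n) :=
    ((Homeomorph.smulOfNeZero r hr.ne').isClosedEmbedding.comp
      isClosed_sphere.isClosedEmbedding_subtypeVal).measurableEmbedding
  rw [sphereMeasure, integral_smul_measure, ENNReal.toReal_ofReal (by positivity),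
    hemb.integral_map, smul_eq_mul]

theorem gammaN'_neg (n : ℕ) (t : ℝ) : gammaN' n (-t) = -gammaN' n t := by
  have h := intervalIntegral.integral_comp_sub_left (a := 0) (b := π)
    (fun α => cos α * exp (-t * cos α) * sin α ^ (n - 2)) π
  simp only [sub_self, sub_zero, cos_pi_sub, sin_pi_sub] at h
  rw [gammaN', ← h, gammaN', ← intervalIntegral.integral_neg]
  congr 1 with α
  ring_nf

theorem integral_sphereMeasure_neg_inner_mul_exp (k : ℕ) {ε : ℝ} (hε : 0 < ε) (u : ℝ^(k + 2)) :
    ∫ y, -inner ℝ u y * exp (-(2 * inner ℝ u y)) ∂sphereMeasure (k + 2) ε =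
      ε ^ (k + 2) * ‖u‖ * gammaN' (k + 2) (2 * ε * ‖u‖) * sphereVol k := by
  rw [integral_sphereMeasure hε]
  simp_rw [real_inner_smul_right]
  rw [integral_toSphere_comp_inner k (g := fun s => -(ε * s) * exp (-(2 * (ε * s))))
    (by fun_prop)]
  have hγ : ∫ α in 0..π, -(ε * (‖u‖ * cos α)) * exp (-(2 * (ε * (‖u‖ * cos α)))) * sin α ^ k =
      ε * ‖u‖ * gammaN' (k + 2) (2 * ε * ‖u‖) := by
    rw [← neg_neg (gammaN' _ _), ← gammaN'_neg, gammaN', Nat.add_sub_cancel,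
      ← intervalIntegral.integral_neg, ← intervalIntegral.integral_const_mul]
    congr 1 with α
    ring_nf
  rw [hγ, show k + 2 - 1 = k + 1 from rfl]
  ring

theorem integral_Icc_cexp_I_mul_int_mul (c : ℤ) :
    ∫ t in Icc 0 (2 * π), Complex.exp (Complex.I * ((c * t : ℝ) : ℂ)) =
      if c = 0 then ((2 * π : ℝ) : ℂ) else 0 := by
  rw [integral_Icc_eq_integral_Ioc, ← intervalIntegral.integral_of_le (by positivity)]
  split_ifs with hc
  · simp [hc]
  · have hc' : Complex.I * ((c : ℝ) : ℂ) ≠ 0 :=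
      mul_ne_zero Complex.I_ne_zero (by exact_mod_cast hc)
    have hperiod : Complex.exp (Complex.I * ((c : ℝ) : ℂ) * ((2 * π : ℝ) : ℂ)) = 1 := by
      rw [← Complex.exp_int_mul_two_pi_mul_I c]
      push_cast
      ring_nf
    simp_rw [Complex.ofReal_mul, ← mul_assoc]
    rw [integral_exp_mul_complex hc', hperiod]
    simp

theorem intVec_sub {n : ℕ} (m m' : Fin n → ℤ) : intVec m - intVec m' = intVec (m - m') := by
  ext i
  simp [intVec]

theorem integral_torus_cexp_I_mul_inner_intVec {n : ℕ} (a : Fin n → ℤ) :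
    ∫ x in {x : ℝ^n | ∀ i, x i ∈ Icc 0 (2 * π)},
        Complex.exp (Complex.I * ((inner ℝ (intVec a) x : ℝ) : ℂ)) =
      if a = 0 then ((2 * π : ℝ) : ℂ) ^ n else 0 := by
  have hbox : WithLp.toLp 2 ⁻¹' {x : ℝ^n | ∀ i, x i ∈ Icc 0 (2 * π)} =
      univ.pi fun _ => Icc 0 (2 * π) := by
    ext v
    simp only [mem_preimage, mem_ofPred_eq, mem_univ_pi]
  have hprod (v : Fin n → ℝ) :
      Complex.exp (Complex.I * ((inner ℝ (intVec a) (WithLp.toLp 2 v) : ℝ) : ℂ)) =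
        ∏ i, Complex.exp (Complex.I * ((a i * v i : ℝ) : ℂ)) := by
    rw [← Complex.exp_sum, ← Finset.mul_sum, PiLp.inner_apply]
    simp [intVec, mul_comm]
  rw [← (PiLp.volume_preserving_toLp (Fin n)).setIntegral_preimage_emb
    (MeasurableEquiv.toLp 2 (Fin n → ℝ)).measurableEmbedding, hbox, volume_pi,
    Measure.restrict_pi_pi]
  simp_rw [hprod]
  rw [integral_fintype_prod_eq_prod (fun i t => Complex.exp (Complex.I * ((a i * t : ℝ) : ℂ)))]
  simp_rw [integral_Icc_cexp_I_mul_int_mul]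
  rw [Finset.prod_ite_zero]
  simp [funext_iff]

/-- Let `n ≥ 2`, `ε > 0` and `m, m' ∈ ℤⁿ`.  Then
`∫_{[0,2π]^n} ∫_{S^{n-1}_ε} (−⟨m', y⟩) e^{i⟨m−m', x⟩} e^{−⟨m+m', y⟩} dσ_ε(y) dx
  = (2π)^n ε^n |m| γ_n'(2ε|m|) vol(S^{n-2})` if `m = m'`, and `= 0` otherwise. -/
theorem integral_torus_sphere_inner_exp (n : ℕ) (hn : 2 ≤ n) (ε : ℝ) (hε : 0 < ε)
    (m m' : Fin n → ℤ) :
    (∫ x in {x : EuclideanSpace ℝ (Fin n) | ∀ i, x i ∈ Set.Icc 0 (2 * Real.pi)},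
      ∫ y, ((-(inner ℝ (intVec m') y : ℝ) : ℝ) : ℂ) *
          Complex.exp (Complex.I * ((inner ℝ (intVec m - intVec m') x : ℝ) : ℂ)) *
          Complex.exp (-(((inner ℝ (intVec m + intVec m') y : ℝ) : ℂ)))
        ∂(sphereMeasure n ε)) =
      if m = m' then
        (((2 * Real.pi) ^ n * ε ^ n * ‖intVec m‖ * gammaN' n (2 * ε * ‖intVec m‖) *
          sphereVol (n - 2) : ℝ) : ℂ)
      else 0 := by
  obtain ⟨k, rfl⟩ : ∃ k, n = k + 2 := ⟨n - 2, by omega⟩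
  simp_rw [mul_right_comm _ (Complex.exp (Complex.I * _) : ℂ), integral_mul_const,
    integral_const_mul, intVec_sub, integral_torus_cexp_I_mul_inner_intVec, sub_eq_zero]
  split_ifs with h
  · subst h
    have hsphere : ∫ y, ((-(inner ℝ (intVec m) y : ℝ) : ℝ) : ℂ) *
          Complex.exp (-(((inner ℝ (intVec m + intVec m) y : ℝ) : ℂ))) ∂sphereMeasure (k + 2) ε =
        ((ε ^ (k + 2) * ‖intVec m‖ * gammaN' (k + 2) (2 * ε * ‖intVec m‖) * sphereVol k : ℝ)
          : ℂ) := by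
      rw [← integral_sphereMeasure_neg_inner_mul_exp k hε, ← integral_complex_ofReal]
      simp_rw [inner_add_left]
      push_cast
      ring_nf
    rw [hsphere, Nat.add_sub_cancel]
    push_cast
    ring
  · exact mul_zero _
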